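/- Let λ* ∈ ℂ, δ > 0, m ≥ 0 an integer, c ∈ ℂ with c ≠ 0, and C, α > 0. For each integer N ≥ 1 let D_N : B_δ(λ*) → ℂ be analytic and satisfy |D_N(λ) − c(λ − λ*)^m| ≤ C(|λ − λ*|^{m+1} + e^{−αN}) for all λ ∈ B_δ(λ*). Then there exist δ* ∈ (0, δ), N* ≥ 1, β > 0, and C′ > 0 such that for every N ≥ N*, the function D_N has exactly m zeros in B_{δ*}(λ*), counted with multiplicity, and every zero λ of D_N in B_{δ*}(λ*) satisfies |λ − λ*| ≤ C′ e^{−βN}. -/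

import Mathlib

/-!
Induction on `m`. If `‖f z - c (z - z₀)^(m+1)‖ ≤ C (‖z - z₀‖^(m+2) + s^(2(m+1)))`, the monomial
dominates on the circle of radius `A s²`, so by the minimum modulus principle `f` has a zero `ρ`
in that disc. Since `‖ρ - z₀‖ = O(s²) = o(s)`, the quotient `f / (z - ρ)` obeys a bound of the
same shape with exponent `m` and perturbation `s`: directly where `‖z - z₀‖ ≥ s`, and by the
maximum modulus principle inside. At `m = 0` the remaining factor is close to `c`, hence
zero-free near `z₀`. All constants are uniform in `f`, so the perturbation `e^{-αN}` can be
written `t^p` with `t = e^{-αN/p}`, and the roots lie within `K t` of `z₀`.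
-/

open Metric Set Filter Topology

section MaxModulus

variable {E : Type*} [NormedAddCommGroup E] [NormedSpace ℂ E] [Nontrivial E] {z₀ : E} {r : ℝ}

theorem norm_le_of_forall_mem_sphere_norm_le {F : Type*} [NormedAddCommGroup F]
    [NormedSpace ℂ F] {f : E → F} {B : ℝ} (hr : r ≠ 0)
    (hf : DifferentiableOn ℂ f (closedBall z₀ r)) (hB : ∀ z ∈ sphere z₀ r, ‖f z‖ ≤ B) {z : E}
    (hz : z ∈ closedBall z₀ r) : ‖f z‖ ≤ B := by
  rw [← closure_ball z₀ hr] at hf hz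
  exact Complex.norm_le_of_forall_mem_frontier_norm_le isBounded_ball hf.diffContOnCl
    (by rwa [frontier_ball z₀ hr]) hz

/-- Minimum modulus principle: applied to `1 / f`, the maximum modulus principle forces a zero. -/
theorem exists_mem_closedBall_eq_zero_of_norm_lt {f : E → ℂ} {e : ℝ} (hr : 0 < r)
    (hf : DifferentiableOn ℂ f (closedBall z₀ r)) (hsphere : ∀ z ∈ sphere z₀ r, e ≤ ‖f z‖)
    (hcenter : ‖f z₀‖ < e) : ∃ ρ ∈ closedBall z₀ r, f ρ = 0 := by
  by_contra! hne
  have he : 0 < e := (norm_nonneg _).trans_lt hcenter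
  have hinv : ‖(f z₀)⁻¹‖ ≤ e⁻¹ :=
    norm_le_of_forall_mem_sphere_norm_le hr.ne' (hf.inv hne)
      (fun z hz => by rw [Pi.inv_apply, norm_inv]; exact inv_anti₀ he (hsphere z hz))
      (mem_closedBall_self hr.le)
  rw [norm_inv, inv_le_inv₀ (norm_pos_iff.2 (hne z₀ (mem_closedBall_self hr.le))) he] at hinv
  exact hinv.not_gt hcenter

end MaxModulus

theorem norm_le_of_norm_le_off_ball {φ : ℂ → ℂ} {z₀ : ℂ} {δ s a b : ℝ} {m : ℕ}
    (hφ : DifferentiableOn ℂ φ (ball z₀ δ)) (hs : 0 < s) (hsδ : s < δ) (hs1 : s ≤ 1)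
    (ha : 0 ≤ a) (hb : 0 ≤ b)
    (hout : ∀ z ∈ ball z₀ δ, s ≤ ‖z - z₀‖ → ‖φ z‖ ≤ a * ‖z - z₀‖ ^ (m + 1) + b * s)
    {z : ℂ} (hz : z ∈ ball z₀ δ) : ‖φ z‖ ≤ (a + b) * (‖z - z₀‖ ^ (m + 1) + s) := by
  rcases le_or_gt s ‖z - z₀‖ with hsz | hzs
  · exact (hout z hz hsz).trans (by nlinarith [pow_nonneg (norm_nonneg (z - z₀)) (m + 1)])
  · have hsphere (y : ℂ) (hy : y ∈ sphere z₀ s) : ‖φ y‖ ≤ (a + b) * s := by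
      have hys : ‖y - z₀‖ = s := mem_sphere_iff_norm.1 hy
      have hy' := hout y (sphere_subset_closedBall.trans (closedBall_subset_ball hsδ) hy) hys.ge
      rw [hys] at hy'
      nlinarith [pow_le_of_le_one hs.le hs1 (Nat.add_one_ne_zero m)]
    refine (norm_le_of_forall_mem_sphere_norm_le hs.ne' (hφ.mono (closedBall_subset_ball hsδ))
      hsphere (mem_closedBall_iff_norm.2 hzs.le)).trans ?_
    nlinarith [pow_nonneg (norm_nonneg (z - z₀)) (m + 1)]

theorem eventually_mul_lt_nhdsGT_zero (k : ℝ) {b : ℝ} (hb : 0 < b) :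
    ∀ᶠ s in 𝓝[>] (0 : ℝ), k * s < b :=
  eventually_nhdsWithin_of_eventually_nhds
    ((continuous_const_mul k).continuousAt.eventually_lt continuousAt_const (by simpa))

theorem tendsto_pow_nhdsGT_zero {p : ℕ} (hp : p ≠ 0) :
    Tendsto (fun t : ℝ => t ^ p) (𝓝[>] 0) (𝓝[>] 0) :=
  tendsto_nhdsWithin_iff.2
    ⟨((continuous_pow p).tendsto' 0 0 (zero_pow hp)).mono_left nhdsWithin_le_nhds,
      eventually_nhdsWithin_of_forall fun _ ht => mem_Ioi.2 (pow_pos ht p)⟩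

def PerturbedMonomialBound (f : ℂ → ℂ) (z₀ : ℂ) (δ : ℝ) (c : ℂ) (m : ℕ) (C ε : ℝ) : Prop :=
  ∀ z ∈ ball z₀ δ, ‖f z - c * (z - z₀) ^ m‖ ≤ C * (‖z - z₀‖ ^ (m + 1) + ε)

namespace PerturbedMonomialBound

variable {f : ℂ → ℂ} {z₀ c : ℂ} {δ C : ℝ} {m : ℕ}

theorem exists_zero {ε r : ℝ} (hb : PerturbedMonomialBound f z₀ δ c (m + 1) C ε)
    (hf : DifferentiableOn ℂ f (ball z₀ δ)) (hc : c ≠ 0) (hr : 0 < r) (hrδ : r < δ)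
    (hCr : 4 * C * r ≤ ‖c‖) (hCε : 4 * C * ε ≤ ‖c‖ * r ^ (m + 1)) :
    ∃ ρ ∈ closedBall z₀ r, f ρ = 0 := by
  have hcr : 0 < ‖c‖ * r ^ (m + 1) := by positivity
  refine exists_mem_closedBall_eq_zero_of_norm_lt hr (hf.mono (closedBall_subset_ball hrδ))
    (e := ‖c‖ * r ^ (m + 1) / 2) (fun z hz => ?_) ?_
  · have hzr : ‖z - z₀‖ = r := mem_sphere_iff_norm.1 hz
    have hbz := hb z (sphere_subset_closedBall.trans (closedBall_subset_ball hrδ) hz)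
    have hmain : ‖c * (z - z₀) ^ (m + 1)‖ ≤ ‖f z‖ + ‖f z - c * (z - z₀) ^ (m + 1)‖ := by
      simpa [norm_sub_rev] using norm_le_norm_add_norm_sub' (c * (z - z₀) ^ (m + 1)) (f z)
    rw [norm_mul, norm_pow, hzr] at hmain
    have hpert : C * (r ^ (m + 1 + 1) + ε) ≤ ‖c‖ * r ^ (m + 1) / 2 := by
      rw [pow_succ']
      nlinarith [mul_le_mul_of_nonneg_right hCr (pow_nonneg hr.le (m + 1))]
    rw [hzr] at hbz
    linarith
  · have hcenter : ‖f z₀‖ ≤ C * ε := by simpa using hb z₀ (mem_ball_self (hr.trans hrδ))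
    linarith

theorem ne_zero {t : ℝ} (hb : PerturbedMonomialBound f z₀ δ c 0 C t) {z : ℂ}
    (hz : z ∈ ball z₀ δ) (hCz : 4 * C * ‖z - z₀‖ ≤ ‖c‖) (hCt : 4 * C * t < ‖c‖) : f z ≠ 0 := by
  intro hfz
  have hbz := hb z hz
  rw [hfz, zero_sub, norm_neg, pow_zero, mul_one, pow_one] at hbz
  linarith [norm_nonneg c]

/-- Away from `z₀`, dividing out the zero `ρ` costs only a factor `‖z - ρ‖ ≥ ‖z - z₀‖ / 2`. -/
theorem norm_dslope_sub_le {s A : ℝ} {ρ z : ℂ}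
    (hb : PerturbedMonomialBound f z₀ δ c (m + 1) C (s ^ (2 * (m + 1)))) (hρ : f ρ = 0)
    (hρz : ‖ρ - z₀‖ ≤ A * s ^ 2) (hC : 0 ≤ C) (hA : 0 ≤ A) (hs : 0 < s) (hsA : 2 * A * s ≤ 1)
    (hs1 : s ≤ 1) (hz : z ∈ ball z₀ δ) (hsz : s ≤ ‖z - z₀‖) :
    ‖dslope f ρ z - c * (z - z₀) ^ m‖ ≤
      2 * C * ‖z - z₀‖ ^ (m + 1) + (2 * C + 2 * ‖c‖ * δ ^ m * A) * s := by
  set w := z - z₀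
  have hw : 0 < ‖w‖ := hs.trans_le hsz
  have hcδ : 0 ≤ ‖c‖ * δ ^ m :=
    mul_nonneg (norm_nonneg c) (pow_nonneg (hw.le.trans (mem_ball_iff_norm.1 hz).le) m)
  have hfactor : f z = (z - ρ) * dslope f ρ z := (sub_smul_dslope_of_zero hρ z).symm
  have hdist : ‖w‖ / 2 ≤ ‖z - ρ‖ := by
    have : ‖w‖ ≤ ‖z - ρ‖ + ‖ρ - z₀‖ := by simpa [w] using norm_sub_le_norm_sub_add_norm_sub z ρ z₀
    nlinarith
  have hss : s ^ (2 * (m + 1)) ≤ s * ‖w‖ := calc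
    s ^ (2 * (m + 1)) ≤ s ^ 2 := pow_le_pow_of_le_one hs.le hs1 (by omega)
    _ ≤ s * ‖w‖ := by rw [sq]; gcongr
  refine le_of_mul_le_mul_left ?_ (half_pos hw)
  calc ‖w‖ / 2 * ‖dslope f ρ z - c * w ^ m‖
      ≤ ‖z - ρ‖ * ‖dslope f ρ z - c * w ^ m‖ := by gcongr
    _ = ‖(f z - c * w ^ (m + 1)) + c * w ^ m * (ρ - z₀)‖ := by
      rw [← norm_mul, hfactor]; congr 1; simp only [w]; ring
    _ ≤ C * (‖w‖ ^ (m + 1 + 1) + s ^ (2 * (m + 1))) + ‖c‖ * δ ^ m * (A * s ^ 2) := by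
      refine (norm_add_le _ _).trans (add_le_add (hb z hz) ?_)
      rw [norm_mul, norm_mul, norm_pow]
      gcongr
      exact (mem_ball_iff_norm.1 hz).le
    _ ≤ C * ‖w‖ ^ (m + 1 + 1) + C * (s * ‖w‖) + ‖c‖ * δ ^ m * A * (s * ‖w‖) := by
      rw [mul_add, mul_assoc (‖c‖ * δ ^ m)]
      gcongr
      rw [sq]; gcongr
    _ = ‖w‖ / 2 * (2 * C * ‖w‖ ^ (m + 1) + (2 * C + 2 * ‖c‖ * δ ^ m * A) * s) := by ring

theorem exists_zero_dslope {s A : ℝ}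
    (hb : PerturbedMonomialBound f z₀ δ c (m + 1) C (s ^ (2 * (m + 1))))
    (hf : DifferentiableOn ℂ f (ball z₀ δ)) (hc : c ≠ 0) (hC : 0 ≤ C) (hA : 1 ≤ A)
    (hAc : 4 * C ≤ ‖c‖ * A ^ (m + 1)) (hs : 0 < s) (hsA : 2 * A * s ≤ 1) (hsδ : s < δ)
    (hsc : 4 * C * A * s ≤ ‖c‖) :
    ∃ ρ, ‖ρ - z₀‖ ≤ A * s ^ 2 ∧ (∀ z, f z = (z - ρ) * dslope f ρ z) ∧
      DifferentiableOn ℂ (dslope f ρ) (ball z₀ δ) ∧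
      PerturbedMonomialBound (dslope f ρ) z₀ δ c m (4 * C + 2 * ‖c‖ * δ ^ m * A) s := by
  have hs1 : s ≤ 1 := by nlinarith
  have hAs : A * s ^ 2 ≤ s / 2 := by nlinarith
  obtain ⟨ρ, hρr, hρ⟩ := hb.exists_zero hf hc (r := A * s ^ 2) (by positivity) (by linarith)
    (by nlinarith [mul_le_mul_of_nonneg_left hs1 (by positivity : 0 ≤ 4 * C * A * s)])
    (by rw [mul_pow, ← pow_mul, mul_comm 2, ← mul_assoc]; gcongr)
  have hρz : ‖ρ - z₀‖ ≤ A * s ^ 2 := mem_closedBall_iff_norm.1 hρr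
  have hρδ : ρ ∈ ball z₀ δ := mem_ball_iff_norm.2 (by linarith)
  have hg : DifferentiableOn ℂ (dslope f ρ) (ball z₀ δ) :=
    (Complex.differentiableOn_dslope (isOpen_ball.mem_nhds hρδ)).2 hf
  refine ⟨ρ, hρz, fun z => (sub_smul_dslope_of_zero hρ z).symm, hg,
    fun z hz => ?_⟩
  have hδ : 0 ≤ δ := hs.le.trans hsδ.le
  refine (norm_le_of_norm_le_off_ball (hg.sub (by fun_prop)) hs hsδ hs1 (by positivity)
    (by positivity) (fun y hy hsy => hb.norm_dslope_sub_le hρ hρz hC (by positivity) hs hsA hs1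
      hy hsy) hz).trans_eq ?_
  ring

theorem exists_uniform_factorization (hδ : 0 < δ) (hc : c ≠ 0) (hC : 0 < C) :
    ∃ δs, 0 < δs ∧ δs < δ ∧ ∃ K > (0 : ℝ), ∃ p : ℕ, p ≠ 0 ∧ ∀ᶠ t in 𝓝[>] (0 : ℝ),
      ∀ f : ℂ → ℂ, DifferentiableOn ℂ f (ball z₀ δ) →
        PerturbedMonomialBound f z₀ δ c m C (t ^ p) →
        ∃ ρ : Fin m → ℂ, (∀ i, ‖ρ i - z₀‖ ≤ K * t) ∧
          ∃ h : ℂ → ℂ, DifferentiableOn ℂ h (ball z₀ δ) ∧ (∀ z ∈ ball z₀ δs, h z ≠ 0) ∧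
            ∀ z, f z = (∏ i, (z - ρ i)) * h z := by
  induction m generalizing C with
  | zero =>
    have hc4 : 0 < ‖c‖ / (4 * C) := by positivity
    refine ⟨min (δ / 2) (‖c‖ / (4 * C)), lt_min (half_pos hδ) hc4,
      (min_le_left _ _).trans_lt (half_lt_self hδ), 1, one_pos, 1, one_ne_zero, ?_⟩
    filter_upwards [eventually_mul_lt_nhdsGT_zero (4 * C) (norm_pos_iff.2 hc)]
      with t ht f hf hb
    refine ⟨finZeroElim, finZeroElim, f, hf, fun z hz => ?_, by simp⟩
    have hzc : ‖z - z₀‖ < ‖c‖ / (4 * C) :=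
      mem_ball_iff_norm.1 (ball_subset_ball (min_le_right _ _) hz)
    exact hb.ne_zero
      (ball_subset_ball ((min_le_left _ _).trans (half_le_self hδ.le)) hz)
      ((lt_div_iff₀' (by positivity)).1 hzc).le (by rwa [pow_one])
  | succ m ih =>
    set A := max 1 (4 * C / ‖c‖)
    have hA : 1 ≤ A := le_max_left _ _
    have hAc : 4 * C ≤ ‖c‖ * A ^ (m + 1) := by
      rw [← div_le_iff₀' (norm_pos_iff.2 hc)]
      exact (le_max_right _ _).trans (le_self_pow₀ hA (Nat.add_one_ne_zero m))
    obtain ⟨δs, hδs, hδsδ, K, hK, p, hp, H⟩ :=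
      ih (C := 4 * C + 2 * ‖c‖ * δ ^ m * A) (by positivity)
    refine ⟨δs, hδs, hδsδ, K + A, by positivity, p * (2 * (m + 1)), by positivity, ?_⟩
    have hsmall : ∀ᶠ s in 𝓝[>] (0 : ℝ), 0 < s ∧ 2 * A * s < 1 ∧ s < δ ∧ 4 * C * A * s < ‖c‖ := by
      filter_upwards [self_mem_nhdsWithin, eventually_mul_lt_nhdsGT_zero (2 * A) one_pos,
        eventually_nhdsWithin_of_eventually_nhds (eventually_lt_nhds hδ),
        eventually_mul_lt_nhdsGT_zero (4 * C * A) (norm_pos_iff.2 hc)] with s hs0 hsA hsδ hsc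
      exact ⟨hs0, hsA, hsδ, hsc⟩
    filter_upwards [H, (tendsto_pow_nhdsGT_zero hp).eventually hsmall, self_mem_nhdsWithin,
      eventually_nhdsWithin_of_eventually_nhds (eventually_le_nhds one_pos)]
      with t hHt ⟨hs, hsA, hsδ, hsc⟩ (ht0 : 0 < t) ht1 f hf hb
    rw [pow_mul] at hb
    obtain ⟨ρ₀, hρ₀, hfac, hgd, hgb⟩ :=
      hb.exists_zero_dslope hf hc hC.le hA hAc hs hsA.le hsδ hsc.le
    obtain ⟨ρ, hρ, h, hh, hh0, hgfac⟩ := hHt _ hgd hgb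
    have hρ₀t : ‖ρ₀ - z₀‖ ≤ A * t := calc
      ‖ρ₀ - z₀‖ ≤ A * (t ^ p) ^ 2 := hρ₀
      _ ≤ A * t := by
        rw [← pow_mul]
        gcongr
        exact pow_le_of_le_one ht0.le ht1 (by positivity)
    refine ⟨Fin.cons ρ₀ ρ, fun i => ?_, h, hh, hh0, fun z => ?_⟩
    · refine Fin.cases ?_ (fun i => ?_) i
      · simpa using hρ₀t.trans (by gcongr; linarith)
      · simpa using (hρ i).trans (by gcongr; linarith)
    · rw [hfac, hgfac, Fin.prod_univ_succ]
      simp only [Fin.cons_zero, Fin.cons_succ]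
      ring

end PerturbedMonomialBound

/-- Rouché-type root counting: if `D_N` are analytic on `B_δ(λ*)` with
`|D_N(λ) − c(λ − λ*)^m| ≤ C(|λ − λ*|^{m+1} + e^{−αN})`, then there are `δ* ∈ (0,δ)`,
`N* ≥ 1`, `β > 0`, `C′ > 0` such that for `N ≥ N*` the function `D_N` has exactly `m`
zeros (with multiplicity) in `B_{δ*}(λ*)`, all within `C′e^{−βN}` of `λ*`. -/
theorem rouche_root_counting
    (lstar : ℂ) (δ : ℝ) (hδ : 0 < δ) (m : ℕ) (c : ℂ) (hc : c ≠ 0)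
    (C α : ℝ) (hC : 0 < C) (hα : 0 < α)
    (D : ℕ → ℂ → ℂ)
    (hD_analytic : ∀ N : ℕ, 1 ≤ N → ∀ l ∈ Metric.ball lstar δ, AnalyticAt ℂ (D N) l)
    (hD_bound : ∀ N : ℕ, 1 ≤ N → ∀ l ∈ Metric.ball lstar δ,
      ‖D N l - c * (l - lstar) ^ m‖ ≤
        C * (‖l - lstar‖ ^ (m + 1) + Real.exp (-α * N))) :
    ∃ δstar : ℝ, 0 < δstar ∧ δstar < δ ∧
      ∃ Nstar : ℕ, 1 ≤ Nstar ∧ ∃ β > (0 : ℝ), ∃ C' > (0 : ℝ),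
        ∀ N : ℕ, Nstar ≤ N →
          -- exactly m zeros, counted with multiplicity, in B_{δ*}(λ*)
          (∃ ρ : Fin m → ℂ,
            (∀ i, ρ i ∈ Metric.ball lstar δstar ∧
              ‖ρ i - lstar‖ ≤ C' * Real.exp (-β * N)) ∧
            ∃ h : ℂ → ℂ, ∀ l ∈ Metric.ball lstar δstar,
              AnalyticAt ℂ h l ∧ h l ≠ 0 ∧ D N l = (∏ i, (l - ρ i)) * h l) ∧
          -- every zero of D_N in B_{δ*}(λ*) is within C′e^{−βN} of λ*
          (∀ l ∈ Metric.ball lstar δstar, D N l = 0 →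
            ‖l - lstar‖ ≤ C' * Real.exp (-β * N)) := by
  obtain ⟨δs, hδs, hδsδ, K, hK, p, hp, H⟩ :=
    PerturbedMonomialBound.exists_uniform_factorization (z₀ := lstar) (m := m) hδ hc hC
  set β := α / p
  have hβ : 0 < β := by positivity
  have ht : Tendsto (fun N : ℕ => Real.exp (-β * N)) atTop (𝓝[>] 0) :=
    Real.tendsto_exp_atBot_nhdsGT.comp
      (tendsto_natCast_atTop_atTop.const_mul_atTop_of_neg (neg_lt_zero.2 hβ))
  obtain ⟨N₀, hN₀⟩ :=
    eventually_atTop.1 ((ht.eventually H).and (ht.eventually (eventually_mul_lt_nhdsGT_zero K hδs)))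
  refine ⟨δs, hδs, hδsδ, max N₀ 1, le_max_right _ _, β, hβ, K, hK, fun N hN => ?_⟩
  obtain ⟨HN, hKδ⟩ := hN₀ N (le_of_max_le_left hN)
  have hN1 : 1 ≤ N := le_of_max_le_right hN
  have hexp : Real.exp (-β * N) ^ p = Real.exp (-α * N) := by
    rw [← Real.exp_nat_mul]; congr 1; simp only [β]; field_simp
  obtain ⟨ρ, hρ, h, hh, hh0, hfac⟩ := HN (D N)
    (fun l hl => (hD_analytic N hN1 l hl).differentiableWithinAt)
    (by rw [hexp]; exact hD_bound N hN1)
  refine ⟨⟨ρ, fun i => ⟨mem_ball_iff_norm.2 ((hρ i).trans_lt hKδ), hρ i⟩, h,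
    fun l hl => ⟨hh.analyticAt (isOpen_ball.mem_nhds (ball_subset_ball hδsδ.le hl)), hh0 l hl,
      hfac l⟩⟩, fun l hl hl0 => ?_⟩
  obtain ⟨i, -, hi⟩ := Finset.prod_eq_zero_iff.1
    ((mul_eq_zero.1 ((hfac l).symm.trans hl0)).resolve_right (hh0 l hl))
  rw [sub_eq_zero.1 hi]
  exact hρ i
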